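/- Let d ≥ 1 and let ℓ_d = arccos(−1/(d+1)) be the geodesic arclength between two vertices of the regular (d+1)-dimensional simplex inscribed in S^d. Then for every ε with 0 < ε < ℓ_d and every finite (ε/4)-net X of S^d, the chromatic number of the ε-distance graph D_{X,ε}(ℓ_d) is at least d+3. -/

import Mathlib

open scoped RealInnerProductSpace

/-- Geodesic distance `arccos ⟨x, y⟩` on the unit sphere in `ℝ^n`. -/
noncomputable def gd {n : ℕ} (x y : EuclideanSpace ℝ (Fin n)) : ℝ :=
  Real.arccos (inner ℝ x y : ℝ)

lemma gd_comm {n : ℕ} (x y : EuclideanSpace ℝ (Fin n)) : gd x y = gd y x := by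
  rw [gd, gd, real_inner_comm]

/-- The unit sphere `S^d ⊆ ℝ^{d+1}`. -/
noncomputable def unitSphere (d : ℕ) : Set (EuclideanSpace ℝ (Fin (d + 1))) :=
  Metric.sphere 0 1

/-- `X` is an `r`-net of `S^d`: every point of the sphere is within geodesic
distance `r` of a point of `X`. -/
def IsNet (d : ℕ) (r : ℝ) (X : Set (EuclideanSpace ℝ (Fin (d + 1)))) : Prop :=
  ∀ y ∈ unitSphere d, ∃ x ∈ X, gd x y ≤ r

/-- The ε-distance graph with parameter α on a set `X ⊆ ℝ^n`: distinct points are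
adjacent iff their geodesic distance lies in `[α - ε, α + ε]`. -/
noncomputable def distGraph {n : ℕ} (X : Set (EuclideanSpace ℝ (Fin n))) (α ε : ℝ) :
    SimpleGraph X where
  Adj x y := x ≠ y ∧ α - ε ≤ gd x.1 y.1 ∧ gd x.1 y.1 ≤ α + ε
  symm := by
    refine ⟨fun x y h => ?_⟩
    exact ⟨h.1.symm, by rw [gd_comm]; exact h.2.1, by rw [gd_comm]; exact h.2.2⟩
  loopless := ⟨fun x h => h.1 rfl⟩

/-! Fix a proper `(d+2)`-coloring. If two net points lie within `3ε/4` of a common point `a`,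
place a regular simplex with one vertex at `a`: net points next to its other `d+1` vertices form
a clique adjacent to both, which uses up all colors but one, so the two points share a color.
Walking from a net point `x` along a great circle in steps of at most `ε/2`, this propagates the
color of `x` to a net point near the point at distance `ℓ_d` from `x`, and that point is
adjacent to `x`. -/

open Real InnerProductGeometry

namespace SimpleGraph

variable {V α ι : Type*} {G : SimpleGraph V}

theorem Coloring.eq_of_forall_adj_of_card_eq_succ [Fintype α] [Fintype ι] (C : G.Coloring α)
    {t : ι → V} (ht : Pairwise fun i j ↦ G.Adj (t i) (t j))
    (hcard : Fintype.card α = Fintype.card ι + 1) {y z : V}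
    (hy : ∀ i, G.Adj (t i) y) (hz : ∀ i, G.Adj (t i) z) : C y = C z := by
  classical
  set S := Finset.univ.image (C ∘ t)
  have hS : Sᶜ.card = 1 := by
    rw [Finset.card_compl, Finset.card_image_of_injective _ (C.injective_comp_of_pairwise_adj t ht),
      Finset.card_univ, hcard, Nat.add_sub_cancel_left]
  have hmem : ∀ v, (∀ i, G.Adj (t i) v) → C v ∈ Sᶜ := fun v hv ↦ by
    simpa [S] using fun i ↦ C.valid (hv i)
  exact Finset.card_le_one.1 hS.le _ (hmem y hy) _ (hmem z hz)

theorem succ_le_chromaticNumber_of_not_colorable {n : ℕ} (h : ¬ G.Colorable n) :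
    (n + 1 : ℕ) ≤ G.chromaticNumber :=
  le_chromaticNumber_iff_colorable.2 fun _ hm ↦
    Nat.cast_le.2 (not_le.1 fun hmn ↦ h (hm.mono hmn))

end SimpleGraph

section GeodesicDistance

variable {n : ℕ} {x y z : EuclideanSpace ℝ (Fin n)}

lemma gd_eq_angle (hx : ‖x‖ = 1) (hy : ‖y‖ = 1) : gd x y = angle x y := by
  simp [gd, angle, hx, hy]

lemma gd_triangle (hx : ‖x‖ = 1) (hy : ‖y‖ = 1) (hz : ‖z‖ = 1) : gd x z ≤ gd x y + gd y z := by
  rw [gd_eq_angle hx hz, gd_eq_angle hx hy, gd_eq_angle hy hz]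
  exact angle_le_angle_add_angle x y z

lemma gd_nonneg : 0 ≤ gd x y := arccos_nonneg _

lemma gd_self (hx : ‖x‖ = 1) : gd x x = 0 := by
  rw [gd_eq_angle hx hx, angle_self (by simp [← norm_ne_zero_iff, hx])]

end GeodesicDistance

lemma mem_unitSphere {d : ℕ} {x : EuclideanSpace ℝ (Fin (d + 1))} :
    x ∈ unitSphere d ↔ ‖x‖ = 1 :=
  mem_sphere_zero_iff_norm

lemma distGraph_adj_of_gd_le {d : ℕ} {X : Set (EuclideanSpace ℝ (Fin (d + 1)))}
    (hXS : X ⊆ unitSphere d) {α ε r s : ℝ} (hεα : ε < α) (hrs : r + s ≤ ε)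
    {a b : EuclideanSpace ℝ (Fin (d + 1))} (ha : ‖a‖ = 1) (hb : ‖b‖ = 1) (hab : gd a b = α)
    {p q : X} (hp : gd p.1 a ≤ r) (hq : gd q.1 b ≤ s) :
    (distGraph X α ε).Adj p q := by
  have hp1 := mem_unitSphere.1 (hXS p.2)
  have hq1 := mem_unitSphere.1 (hXS q.2)
  have hlow : α - ε ≤ gd p.1 q.1 := by
    have := gd_triangle ha hp1 hb
    have := gd_triangle hp1 hq1 hb
    linarith [gd_comm a p.1]
  refine ⟨fun hpq ↦ ?_, hlow, ?_⟩
  · rw [hpq, gd_self hq1] at hlow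
    linarith
  · have := gd_triangle hp1 ha hq1
    have := gd_triangle ha hb hq1
    linarith [gd_comm q.1 b]

theorem exists_regular_simplex (n : ℕ) :
    ∃ w : Fin (n + 2) → EuclideanSpace ℝ (Fin (n + 1)), (∀ i, ‖w i‖ = 1) ∧
      Pairwise fun i j ↦ ⟪w i, w j⟫ = -(1 / (n + 1)) := by
  set k : ℝ := n + 2
  have hk0 : k ≠ 0 := by positivity
  have hk1 : k - 1 = n + 1 := by ring
  let e : Fin (n + 2) → EuclideanSpace ℝ (Fin (n + 2)) := fun i ↦ EuclideanSpace.single i 1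
  let o : EuclideanSpace ℝ (Fin (n + 2)) := ∑ i, e i
  have hee : ∀ i j, ⟪e i, e j⟫ = if i = j then 1 else 0 := fun i j ↦ by
    simp [e, EuclideanSpace.inner_single_left, PiLp.single_apply]
  have hoe : ∀ i, ⟪o, e i⟫ = 1 := fun i ↦ by simp [o, sum_inner, hee]
  have hoo : ⟪o, o⟫ = k := calc
    ⟪o, o⟫ = ∑ i, ⟪o, e i⟫ := inner_sum _ _ _
    _ = k := by simp [hoe, k]
  -- The centred standard basis `e i - o / k` is a regular simplex in the hyperplane `o^⊥`, which
  -- `φ` below identifies isometrically with `ℝ^{n+1}`.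
  let u : Fin (n + 2) → EuclideanSpace ℝ (Fin (n + 2)) := fun i ↦ e i - (1 / k) • o
  have huu : ∀ i j, ⟪u i, u j⟫ = (if i = j then 1 else 0) - 1 / k := fun i j ↦ by
    simp only [u, inner_sub_left, inner_sub_right, real_inner_smul_left, real_inner_smul_right,
      hee, real_inner_comm o, hoe, hoo]
    field_simp
    ring
  have huo : ∀ i, u i ∈ (ℝ ∙ o)ᗮ := fun i ↦ by
    rw [Submodule.mem_orthogonal_singleton_iff_inner_right]
    simp only [u, inner_sub_right, real_inner_smul_right, hoe, hoo]
    field_simp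
    simp
  have ho : o ≠ 0 := fun h ↦ by rw [h, inner_zero_left] at hoo; linarith
  have : Fact (Module.finrank ℝ (EuclideanSpace ℝ (Fin (n + 2))) = n + 1 + 1) := ⟨by simp⟩
  let φ := (OrthonormalBasis.fromOrthogonalSpanSingleton (𝕜 := ℝ) (n + 1) ho).repr
  set c : ℝ := √(k / (k - 1))
  have hc : c * c = k / (k - 1) := Real.mul_self_sqrt (by rw [hk1]; positivity)
  let w : Fin (n + 2) → EuclideanSpace ℝ (Fin (n + 1)) := fun i ↦ c • φ ⟨u i, huo i⟩
  have hww : ∀ i j, ⟪w i, w j⟫ = c * c * ((if i = j then 1 else 0) - 1 / k) := fun i j ↦ by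
    simp only [w, real_inner_smul_left, real_inner_smul_right, φ.inner_map_map,
      Submodule.coe_inner, huu, ← mul_assoc]
  refine ⟨w, fun i ↦ ?_, fun i j hij ↦ ?_⟩
  · rw [norm_eq_sqrt_real_inner, hww, if_pos rfl, hc, hk1, Real.sqrt_eq_one]
    field_simp
    linarith
  · change ⟪w i, w j⟫ = _
    rw [hww, if_neg hij, hc, hk1]
    field_simp
    ring

theorem exists_regular_simplex_with_vertex {n : ℕ} {a : EuclideanSpace ℝ (Fin (n + 1))}
    (ha : ‖a‖ = 1) :
    ∃ v : Fin (n + 1) → EuclideanSpace ℝ (Fin (n + 1)), (∀ i, ‖v i‖ = 1) ∧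
      (Pairwise fun i j ↦ ⟪v i, v j⟫ = -(1 / (n + 1))) ∧ ∀ i, ⟪v i, a⟫ = -(1 / (n + 1)) := by
  obtain ⟨w, hw1, hw⟩ := exists_regular_simplex n
  let f := Submodule.reflection (ℝ ∙ (w (Fin.last _) - a))ᗮ
  have hfa : f (w (Fin.last _)) = a := Submodule.reflection_sub (by rw [hw1, ha])
  refine ⟨fun i ↦ f (w i.castSucc), fun i ↦ by rw [f.norm_map, hw1], fun i j hij ↦ ?_, fun i ↦ ?_⟩
  · exact (f.inner_map_map _ _).trans (hw (Fin.castSucc_injective _ |>.ne hij))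
  · rw [← hfa, f.inner_map_map]
    exact hw (Fin.castSucc_lt_last i).ne

theorem exists_norm_eq_one_inner_eq_zero {d : ℕ} (hd : 1 ≤ d) {x : EuclideanSpace ℝ (Fin (d + 1))}
    (hx : x ≠ 0) : ∃ u : EuclideanSpace ℝ (Fin (d + 1)), ‖u‖ = 1 ∧ ⟪x, u⟫ = 0 := by
  have : Fact (Module.finrank ℝ (EuclideanSpace ℝ (Fin (d + 1))) = d + 1) := ⟨by simp⟩
  let b := OrthonormalBasis.fromOrthogonalSpanSingleton (𝕜 := ℝ) d hx
  let i : Fin d := ⟨0, hd⟩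
  exact ⟨b i, b.orthonormal.1 i,
    Submodule.mem_orthogonal_singleton_iff_inner_right.1 (b i).2⟩

section GreatCircle

variable {n : ℕ} {x u : EuclideanSpace ℝ (Fin n)}

lemma inner_cos_smul_add_sin_smul (hx : ‖x‖ = 1) (hu : ‖u‖ = 1) (hxu : ⟪x, u⟫ = 0) (s t : ℝ) :
    ⟪cos s • x + sin s • u, cos t • x + sin t • u⟫ = cos (s - t) := by
  have hxx : ⟪x, x⟫ = 1 := by rw [real_inner_self_eq_norm_sq, hx, one_pow]
  have huu : ⟪u, u⟫ = 1 := by rw [real_inner_self_eq_norm_sq, hu, one_pow]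
  simp only [inner_add_left, inner_add_right, real_inner_smul_left, real_inner_smul_right, hxx,
    huu, hxu, real_inner_comm x u, cos_sub]
  ring

lemma norm_cos_smul_add_sin_smul (hx : ‖x‖ = 1) (hu : ‖u‖ = 1) (hxu : ⟪x, u⟫ = 0) (s : ℝ) :
    ‖cos s • x + sin s • u‖ = 1 := by
  rw [norm_eq_sqrt_real_inner, inner_cos_smul_add_sin_smul hx hu hxu, sub_self, cos_zero, sqrt_one]

lemma gd_cos_smul_add_sin_smul (hx : ‖x‖ = 1) (hu : ‖u‖ = 1) (hxu : ⟪x, u⟫ = 0) {s t : ℝ}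
    (hst : s ≤ t) (hts : t ≤ s + π) :
    gd (cos s • x + sin s • u) (cos t • x + sin t • u) = t - s := by
  rw [gd, inner_cos_smul_add_sin_smul hx hu hxu, ← cos_neg, neg_sub]
  exact arccos_cos (by linarith) (by linarith)

end GreatCircle

theorem exists_gd_chain {d : ℕ} (hd : 1 ≤ d) {x : EuclideanSpace ℝ (Fin (d + 1))} (hx : ‖x‖ = 1)
    {α δ : ℝ} (hα : 0 ≤ α) (hαπ : α ≤ π) (hδ : 0 < δ) :
    ∃ (g : ℕ → EuclideanSpace ℝ (Fin (d + 1))) (N : ℕ), (∀ k, ‖g k‖ = 1) ∧ g 0 = x ∧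
      (∀ k, gd (g k) (g (k + 1)) ≤ δ) ∧ gd x (g N) = α := by
  obtain ⟨u, hu, hxu⟩ := exists_norm_eq_one_inner_eq_zero hd (ne_zero_of_norm_ne_zero
    (hx.trans_ne one_ne_zero))
  obtain ⟨N, hN⟩ := exists_nat_gt (α / δ)
  have hN0 : (0 : ℝ) < N := (div_nonneg hα hδ.le).trans_lt hN
  set θ := α / N
  have hθ : 0 ≤ θ := by positivity
  have hθδ : θ ≤ δ := by
    rw [div_lt_iff₀ hδ] at hN
    exact div_le_of_le_mul₀ hN0.le hδ.le (by linarith)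
  have hN1 : (1 : ℝ) ≤ N := Nat.one_le_cast.2 (Nat.pos_of_ne_zero (by rintro rfl; simp at hN0))
  have hθπ : θ ≤ π := (div_le_self hα hN1).trans hαπ
  have hNθ : N * θ = α := mul_div_cancel₀ α hN0.ne'
  set g : ℕ → EuclideanSpace ℝ (Fin (d + 1)) := fun k ↦ cos (k * θ) • x + sin (k * θ) • u
  refine ⟨g, N, fun k ↦ norm_cos_smul_add_sin_smul hx hu hxu _, by simp [g], fun k ↦ ?_, ?_⟩
  · rw [gd_cos_smul_add_sin_smul hx hu hxu (by gcongr; simp) (by push_cast; linarith)]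
    push_cast
    linarith
  · simpa [g, hNθ] using gd_cos_smul_add_sin_smul hx hu hxu (s := 0) (t := N * θ) (by positivity)
      (by simpa [hNθ])

theorem color_eq_of_gd_le {d : ℕ} {ε : ℝ} {X : Set (EuclideanSpace ℝ (Fin (d + 1)))}
    (hXS : X ⊆ unitSphere d) (hnet : IsNet d (ε / 4) X) (hεα : ε < arccos (-(1 / (d + 1))))
    (C : (distGraph X (arccos (-(1 / (d + 1)))) ε).Coloring (Fin (d + 2)))
    {a : EuclideanSpace ℝ (Fin (d + 1))} (ha : ‖a‖ = 1) {y z : X}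
    (hy : gd y.1 a ≤ 3 * ε / 4) (hz : gd z.1 a ≤ 3 * ε / 4) : C y = C z := by
  have hε : 0 ≤ ε := by linarith [gd_nonneg (x := y.1) (y := a)]
  obtain ⟨v, hv1, hvv, hva⟩ := exists_regular_simplex_with_vertex ha
  choose t ht hvt using fun i ↦ hnet (v i) (mem_unitSphere.2 (hv1 i))
  have hadj : ∀ i {w : X} {b}, ‖b‖ = 1 → gd (v i) b = arccos (-(1 / (d + 1))) →
      gd w.1 b ≤ 3 * ε / 4 → (distGraph X _ ε).Adj ⟨t i, ht i⟩ w := fun i _ _ hb hvb hw ↦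
    distGraph_adj_of_gd_le hXS hεα (by linarith) (hv1 i) hb hvb (hvt i) hw
  exact C.eq_of_forall_adj_of_card_eq_succ
    (fun i j hij ↦ hadj i (hv1 j) (by rw [gd, hvv hij]) (by linarith [hvt j]))
    (by simp) (fun i ↦ hadj i ha (by rw [gd, hva i]) hy) (fun i ↦ hadj i ha (by rw [gd, hva i]) hz)

theorem exists_gd_le_color_eq_of_chain {d : ℕ} {ε : ℝ} {X : Set (EuclideanSpace ℝ (Fin (d + 1)))}
    (hXS : X ⊆ unitSphere d) (hnet : IsNet d (ε / 4) X) (hεα : ε < arccos (-(1 / (d + 1))))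
    (C : (distGraph X (arccos (-(1 / (d + 1)))) ε).Coloring (Fin (d + 2)))
    {g : ℕ → EuclideanSpace ℝ (Fin (d + 1))} (hg : ∀ k, ‖g k‖ = 1)
    (hstep : ∀ k, gd (g k) (g (k + 1)) ≤ ε / 2) {p : X} (hp : gd p.1 (g 0) ≤ ε / 4) (N : ℕ) :
    ∃ q : X, gd q.1 (g N) ≤ ε / 4 ∧ C q = C p := by
  induction N with
  | zero => exact ⟨p, hp, rfl⟩
  | succ k ih =>
    obtain ⟨q, hq, hqp⟩ := ih
    obtain ⟨r, hr, hrg⟩ := hnet (g (k + 1)) (mem_unitSphere.2 (hg _))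
    have := gd_triangle (mem_unitSphere.1 (hXS hr)) (hg (k + 1)) (hg k)
    refine ⟨⟨r, hr⟩, hrg, .trans ?_ hqp⟩
    exact color_eq_of_gd_le hXS hnet hεα C (hg k)
      (by linarith [gd_comm (g k) (g (k + 1)), hstep k])
      (by linarith [gd_nonneg (x := q.1) (y := g k)])

theorem stmt_3_general (d : ℕ) (hd : 1 ≤ d) (ε : ℝ) (hε0 : 0 < ε)
    (hεα : ε < Real.arccos (-(1 / (d + 1))))
    (X : Set (EuclideanSpace ℝ (Fin (d + 1)))) (hXS : X ⊆ unitSphere d)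
    (hnet : IsNet d (ε / 4) X) :
    (d + 3 : ℕ) ≤ (distGraph X (Real.arccos (-(1 / (d + 1)))) ε).chromaticNumber := by
  refine SimpleGraph.succ_le_chromaticNumber_of_not_colorable (n := d + 2) fun ⟨C⟩ ↦ ?_
  obtain ⟨x, hxX, -⟩ := hnet (EuclideanSpace.single 0 1) (by simp [mem_unitSphere])
  have hx := mem_unitSphere.1 (hXS hxX)
  obtain ⟨g, N, hg, rfl, hstep, hgN⟩ :=
    exists_gd_chain hd hx (arccos_nonneg _) (arccos_le_pi _) (half_pos hε0)
  obtain ⟨p, hp, hpx⟩ := exists_gd_le_color_eq_of_chain hXS hnet hεα C hg hstep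
    (p := ⟨g 0, hxX⟩) (by rw [gd_self hx]; positivity) N
  refine C.valid ?_ hpx.symm
  exact distGraph_adj_of_gd_le hXS hεα (r := 0) (by linarith) hx (hg N) hgN (gd_self hx).le hp

/-- with `ℓ_d = arccos(-1/(d+1))` the side arclength of the regular inscribed
`(d+1)`-simplex, `χ(D_{X,ε}(ℓ_d)) ≥ d + 3` for every finite `(ε/4)`-net `X` of `S^d`. -/
theorem stmt_3 (d : ℕ) (hd : 1 ≤ d) (ε : ℝ) (hε0 : 0 < ε)
    (hεα : ε < Real.arccos (-(1 / (d + 1))))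
    (X : Set (EuclideanSpace ℝ (Fin (d + 1)))) (hXS : X ⊆ unitSphere d)
    (hXfin : X.Finite) (hnet : IsNet d (ε / 4) X) :
    (d + 3 : ℕ) ≤ (distGraph X (Real.arccos (-(1 / (d + 1)))) ε).chromaticNumber :=
  stmt_3_general d hd ε hε0 hεα X hXS hnet
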